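/- Let A → B be a morphism of differential graded algebras inducing an isomorphism on H^1 and with H^2(A) = 0. Then all Massey products of elements of H^1(B) vanish: for every m ≥ 2 and all β_1, ..., β_m ∈ H^1(B), the Massey product ⟨β_1, ..., β_m⟩ ⊆ H^2(B) is defined and contains 0. -/
import Mathlib


/-- A differential graded algebra structure on an `R`-algebra `A`. -/
structure DGAOn (R : Type*) (A : Type*) [CommRing R] [Ring A] [Algebra R A] where
  grading : ℕ → Submodule R A
  d : A →ₗ[R] A
  d_mem : ∀ i, ∀ a ∈ grading i, d a ∈ grading (i + 1)
  d_sq : ∀ a : A, d (d a) = 0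
  grading_mul : ∀ (i j : ℕ) (a b : A), a ∈ grading i → b ∈ grading j →
    a * b ∈ grading (i + j)
  leibniz : ∀ (i : ℕ) (a b : A), a ∈ grading i →
    d (a * b) = d a * b + ((-1 : R) ^ i) • (a * d b)

/-- A cocycle of degree `n`. -/
def IsCocycle {R A : Type*} [CommRing R] [Ring A] [Algebra R A]
    (D : DGAOn R A) (n : ℕ) (a : A) : Prop :=
  a ∈ D.grading n ∧ D.d a = 0

/-- Two degree-`n` cocycles are cohomologous. -/
def Cohomologous {R A : Type*} [CommRing R] [Ring A] [Algebra R A]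
    (D : DGAOn R A) (n : ℕ) (a b : A) : Prop :=
  IsCocycle D n a ∧ IsCocycle D n b ∧ ∃ u ∈ D.grading (n - 1), a - b = D.d u

/-- A defining system of length `k` for the Massey product of the classes of the
degree-1 cocycles `z 1, …, z k`. -/
def IsDefiningSystemFor {R A : Type*} [CommRing R] [Ring A] [Algebra R A]
    (D : DGAOn R A) (k : ℕ) (z : ℕ → A) (c : ℕ → ℕ → A) : Prop :=
  (∀ i j, 1 ≤ i → i ≤ j → j ≤ k → c i j ∈ D.grading 1) ∧
  (∀ i, 1 ≤ i → i ≤ k → Cohomologous D 1 (c i i) (z i)) ∧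
  (∀ i l, 1 ≤ i → i < l → l ≤ k → (i, l) ≠ (1, k) →
    D.d (c i l) = ∑ j ∈ Finset.Ico i l, c i j * c (j + 1) l)

/-- The Massey product cocycle associated to a defining system of length `k`. -/
def masseyCocycle {R A : Type*} [CommRing R] [Ring A] [Algebra R A]
    (D : DGAOn R A) (k : ℕ) (c : ℕ → ℕ → A) : A :=
  ∑ j ∈ Finset.Ico 1 k, c 1 j * c (j + 1) k

/-- The Massey product `⟨[z 1], …, [z k]⟩` is defined and contains `0 ∈ H²`. -/
def MasseyVanishes {R A : Type*} [CommRing R] [Ring A] [Algebra R A]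
    (D : DGAOn R A) (k : ℕ) (z : ℕ → A) : Prop :=
  ∃ c : ℕ → ℕ → A, IsDefiningSystemFor D k z c ∧
    ∃ u ∈ D.grading 1, D.d u = masseyCocycle D k c

open Classical in
noncomputable def mF {R A : Type*} [CommRing R] [Ring A] [Algebra R A]
    (D : DGAOn R A) (a : ℕ → A) : ℕ → ℕ → ℕ → A
  | 0, i, _ => a i
  | (g+1), i, j =>
    if j - i ≤ g then mF D a g i j
    else if h : ∃ u, u ∈ D.grading 1 ∧
        D.d u = ∑ p ∈ Finset.Ico i j, mF D a g i p * mF D a g (p+1) j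
      then h.choose else 0

noncomputable def mC {R A : Type*} [CommRing R] [Ring A] [Algebra R A]
    (D : DGAOn R A) (a : ℕ → A) (i j : ℕ) : A := mF D a (j - i) i j

lemma mF_stable {R A : Type*} [CommRing R] [Ring A] [Algebra R A]
    (D : DGAOn R A) (a : ℕ → A) :
    ∀ g i j, j - i ≤ g → mF D a g i j = mC D a i j := by
  intro g
  induction g with
  | zero =>
    intro i j h
    have h0 : j - i = 0 := Nat.le_zero.mp h
    simp [mC, h0, mF]
  | succ g ih =>
    intro i j h
    by_cases h' : j - i ≤ g
    · rw [show mF D a (g+1) i j = mF D a g i j from if_pos h']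
      exact ih i j h'
    · have : j - i = g + 1 := by omega
      rw [mC, this]

/-- the key algebraic cancellation: the Massey cochain is closed. -/
lemma dS_zero {R A : Type*} [CommRing R] [Ring A] [Algebra R A]
    (D : DGAOn R A) (c : ℕ → ℕ → A) (i l : ℕ)
    (hg : ∀ p q, i ≤ p → p ≤ q → q ≤ l → (p, q) ≠ (i, l) → c p q ∈ D.grading 1)
    (hrel : ∀ p q, i ≤ p → p ≤ q → q ≤ l → (p, q) ≠ (i, l) →
      D.d (c p q) = ∑ j ∈ Finset.Ico p q, c p j * c (j+1) q) :
    D.d (∑ j ∈ Finset.Ico i l, c i j * c (j+1) l) = 0 := by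
  rcases le_or_gt l i with hli | hil
  · rw [Finset.Ico_eq_empty (by omega), Finset.sum_empty, map_zero]
  rw [map_sum]
  have step : ∀ j ∈ Finset.Ico i l,
      D.d (c i j * c (j+1) l) =
        (∑ p ∈ Finset.Ico i j, (c i p * c (p+1) j) * c (j+1) l)
        - ∑ q ∈ Finset.Ico (j+1) l, c i j * (c (j+1) q * c (q+1) l) := by
    intro j hj
    rw [Finset.mem_Ico] at hj
    rw [D.leibniz 1 _ _ (hg i j le_rfl (by omega) (by omega) (by simp; omega)),
      hrel i j le_rfl (by omega) (by omega) (by simp; omega),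
      hrel (j+1) l (by omega) (by omega) le_rfl (by simp; omega),
      pow_one, neg_one_smul, Finset.sum_mul, Finset.mul_sum, ← sub_eq_add_neg]
  rw [Finset.sum_congr rfl step, Finset.sum_sub_distrib, sub_eq_zero]
  rw [← Finset.sum_Ico_Ico_comm' i l (fun p j => (c i p * c (p+1) j) * c (j+1) l)]
  exact Finset.sum_congr rfl fun p _ => Finset.sum_congr rfl fun j _ => mul_assoc _ _ _

/-- let `φ : A → B` be a morphism of differential graded algebras
inducing an isomorphism on `H¹`, with `H²(A) = 0`.  Then all Massey products of
elements of `H¹(B)` vanish: for every `m ≥ 2` and all classes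
`β₁, …, β_m ∈ H¹(B)` (given by degree-1 cocycles `z 1, …, z m` of `B`) the Massey
product `⟨β₁, …, β_m⟩ ⊆ H²(B)` is defined and contains `0`. -/
theorem massey_vanish_of_dga_map {R A B : Type*} [Field R]
    [Ring A] [Algebra R A] [Ring B] [Algebra R B]
    (DA : DGAOn R A) (DB : DGAOn R B) (φ : A →ₐ[R] B)
    (hgr : ∀ i, ∀ a ∈ DA.grading i, φ a ∈ DB.grading i)
    (hd : ∀ a : A, φ (DA.d a) = DB.d (φ a))
    (hsurjH1 : ∀ b : B, IsCocycle DB 1 b →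
      ∃ a : A, IsCocycle DA 1 a ∧ Cohomologous DB 1 (φ a) b)
    (hinjH1 : ∀ a : A, IsCocycle DA 1 a →
      (∃ u ∈ DB.grading 0, φ a = DB.d u) → ∃ v ∈ DA.grading 0, a = DA.d v)
    (hH2A : ∀ a : A, IsCocycle DA 2 a → ∃ u ∈ DA.grading 1, a = DA.d u)
    (m : ℕ) (hm : 2 ≤ m)
    (z : ℕ → B) (hz : ∀ i, 1 ≤ i → i ≤ m → IsCocycle DB 1 (z i)) :
    MasseyVanishes DB m z := by
  classical
  set a : ℕ → A := fun i =>
    if h : ∃ x : A, IsCocycle DA 1 x ∧ Cohomologous DB 1 (φ x) (z i) then h.choose else 0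
    with ha_def
  have ha : ∀ i, 1 ≤ i → i ≤ m →
      IsCocycle DA 1 (a i) ∧ Cohomologous DB 1 (φ (a i)) (z i) := by
    intro i h1 h2
    have h : ∃ x : A, IsCocycle DA 1 x ∧ Cohomologous DB 1 (φ x) (z i) :=
      hsurjH1 (z i) (hz i h1 h2)
    simp only [ha_def, dif_pos h]
    exact h.choose_spec
  have key : ∀ g : ℕ, ∀ i j : ℕ, 1 ≤ i → j ≤ m → i + g = j →
      (mC DA a i j ∈ DA.grading 1 ∧ (g = 0 → mC DA a i j = a i) ∧
        DA.d (mC DA a i j) = ∑ p ∈ Finset.Ico i j, mC DA a i p * mC DA a (p+1) j) := by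
    intro g
    induction g using Nat.strong_induction_on with
    | _ g IH =>
      intro i j h1 h2 hij
      match g, IH, hij with
      | 0, IH, hij =>
        have hji : j = i := by omega
        subst hji
        have e : mC DA a j j = a j := by
          rw [mC, show j - j = 0 by omega]
          simp [mF]
        have hc := (ha j h1 h2).1
        refine ⟨e ▸ hc.1, fun _ => e, ?_⟩
        rw [Finset.Ico_self, Finset.sum_empty, e, hc.2]
      | (g+1), IH, hij =>
        have hilj : i < j := by omega
        have hmemIH : ∀ p q, i ≤ p → p ≤ q → q ≤ j → (p, q) ≠ (i, j) →
            mC DA a p q ∈ DA.grading 1 := by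
          intro p q hp hpq hq hne
          have hne' : ¬(p = i ∧ q = j) := by
            rintro ⟨rfl, rfl⟩; exact hne rfl
          exact (IH (q - p) (by omega) p q (by omega) (by omega) (by omega)).1
        have hrelIH : ∀ p q, i ≤ p → p ≤ q → q ≤ j → (p, q) ≠ (i, j) →
            DA.d (mC DA a p q) = ∑ r ∈ Finset.Ico p q, mC DA a p r * mC DA a (r+1) q := by
          intro p q hp hpq hq hne
          have hne' : ¬(p = i ∧ q = j) := by
            rintro ⟨rfl, rfl⟩; exact hne rfl
          exact (IH (q - p) (by omega) p q (by omega) (by omega) (by omega)).2.2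
        set S : A := ∑ p ∈ Finset.Ico i j, mC DA a i p * mC DA a (p+1) j with hS_def
        have hS2 : S ∈ DA.grading 2 := by
          refine Submodule.sum_mem _ fun p hp => ?_
          rw [Finset.mem_Ico] at hp
          have := DA.grading_mul 1 1 _ _
            (hmemIH i p le_rfl (by omega) (by omega) (by simp; omega))
            (hmemIH (p+1) j (by omega) (by omega) le_rfl (by simp; omega))
          simpa using this
        have hdS : DA.d S = 0 := dS_zero DA (mC DA a) i j hmemIH hrelIH
        obtain ⟨u, hu1, hu2⟩ := hH2A S ⟨hS2, hdS⟩
        have eS : (∑ p ∈ Finset.Ico i j, mF DA a g i p * mF DA a g (p+1) j) = S := by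
          refine Finset.sum_congr rfl fun p hp => ?_
          rw [Finset.mem_Ico] at hp
          rw [mF_stable DA a g i p (by omega), mF_stable DA a g (p+1) j (by omega)]
        have hex : ∃ v, v ∈ DA.grading 1 ∧
            DA.d v = ∑ p ∈ Finset.Ico i j, mF DA a g i p * mF DA a g (p+1) j :=
          ⟨u, hu1, by rw [eS]; exact hu2.symm⟩
        have e1 : mC DA a i j = hex.choose := by
          rw [mC, show j - i = g + 1 by omega]
          simp only [mF]
          rw [if_neg (by omega), dif_pos hex]
        refine ⟨e1 ▸ hex.choose_spec.1, fun h0 => absurd h0 (Nat.succ_ne_zero g), ?_⟩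
        rw [e1, hex.choose_spec.2, eS]
  refine ⟨fun p q => φ (mC DA a p q), ⟨?_, ?_, ?_⟩, φ (mC DA a 1 m), ?_, ?_⟩
  · intro i j h1 h12 h2
    exact hgr 1 _ ((key (j - i) i j h1 h2 (by omega)).1)
  · intro i h1 h2
    show Cohomologous DB 1 (φ (mC DA a i i)) (z i)
    rw [(key 0 i i h1 h2 (by omega)).2.1 rfl]
    exact (ha i h1 h2).2
  · intro i l h1 hil h2 _
    show DB.d (φ (mC DA a i l)) = _
    rw [← hd, (key (l - i) i l h1 h2 (by omega)).2.2, map_sum]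
    simp [map_mul]
  · exact hgr 1 _ (key (m - 1) 1 m le_rfl le_rfl (by omega)).1
  · show DB.d (φ (mC DA a 1 m)) = _
    rw [← hd, (key (m - 1) 1 m le_rfl le_rfl (by omega)).2.2, map_sum]
    simp [masseyCocycle, map_mul]
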